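/- arXiv:2511.19361 — 2 statements merged into one kernel-verified Lean document; each statement's English description precedes it below -/
import Mathlib

section
/- The map sending a typical partition λ ∈ H'(k,ℓ) to the pair (μ, ν) with μ = (λ_1 - ℓ, ..., λ_k - ℓ) and ν = (λ'_1 - k, ..., λ'_ℓ - k) (where λ' is the conjugate partition) is a bijection between typical partitions in H(k,ℓ) of size n and pairs (μ, ν) of partitions with μ having at most k parts, ν having at most ℓ parts, and |μ| + |ν| = n - kℓ. -/
/-- A partition, recorded by its (0-indexed) parts: `parts i` is the
`(i+1)`-st part `λ_{i+1}`. -/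
structure PartitionF where
  parts : ℕ →₀ ℕ
  antitone : ∀ ⦃i j : ℕ⦄, i ≤ j → parts j ≤ parts i

/-- The size `|λ|` of a partition: the sum of its parts. -/
def psize (lam : PartitionF) : ℕ := lam.parts.sum fun _ m => m

/-- The conjugate partition: `pconj lam j` is the `(j+1)`-st part `λ'_{j+1}`
of the conjugate, i.e. the number of parts of `λ` that are `> j`. -/
def pconj (lam : PartitionF) (j : ℕ) : ℕ :=
  (lam.parts.support.filter fun i => j < lam.parts i).card

lemma PartitionF.ext' {a b : PartitionF} (h : ∀ i, a.parts i = b.parts i) : a = b := by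
  cases a; cases b
  simp only [PartitionF.mk.injEq]
  exact Finsupp.ext h

lemma parts_zero_of_le (p : PartitionF) {a b : ℕ} (h : p.parts a = 0) (hab : a ≤ b) :
    p.parts b = 0 :=
  Nat.le_antisymm (h ▸ p.antitone hab) (Nat.zero_le _)

lemma down_eq_range (S : Finset ℕ) (h : ∀ ⦃a b : ℕ⦄, b ∈ S → a ≤ b → a ∈ S) :
    S = Finset.range S.card := by
  have h1 : ∀ x ∈ S, x < S.card := by
    intro x hx
    have hsub : Finset.range (x + 1) ⊆ S := fun a ha =>
      h hx (Nat.lt_succ_iff.mp (Finset.mem_range.mp ha))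
    have := Finset.card_le_card hsub
    simpa using this
  exact Finset.eq_of_subset_of_card_le
    (fun x hx => Finset.mem_range.mpr (h1 x hx)) (by simp)

lemma pconj_filter_eq (lam : PartitionF) (j : ℕ) :
    lam.parts.support.filter (fun i => j < lam.parts i) = Finset.range (pconj lam j) :=
  down_eq_range _ (by
    intro a b hb hab
    simp only [Finset.mem_filter, Finsupp.mem_support_iff] at hb ⊢
    have := lam.antitone hab
    exact ⟨by omega, by omega⟩)

lemma lt_pconj_iff (lam : PartitionF) (i j : ℕ) : i < pconj lam j ↔ j < lam.parts i := by
  rw [← Finset.mem_range, ← pconj_filter_eq]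
  simp only [Finset.mem_filter, Finsupp.mem_support_iff]
  exact ⟨fun h => h.2, fun h => ⟨by omega, h⟩⟩

lemma pconj_anti (lam : PartitionF) {j j' : ℕ} (h : j ≤ j') : pconj lam j' ≤ pconj lam j := by
  by_contra hc
  push_neg at hc
  have h1 : j' < lam.parts (pconj lam j) := (lt_pconj_iff _ _ _).mp hc
  have h2 : ¬ j < lam.parts (pconj lam j) := by
    rw [← lt_pconj_iff]; omega
  omega

lemma pconj_eq_zero (lam : PartitionF) {j : ℕ} (h : lam.parts 0 ≤ j) : pconj lam j = 0 := by
  by_contra hc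
  have := (lt_pconj_iff lam 0 j).mp (Nat.pos_of_ne_zero hc)
  omega

lemma pconj_eq_card_range (lam : PartitionF) {N : ℕ} (hN : ∀ i, N ≤ i → lam.parts i = 0)
    (j : ℕ) :
    pconj lam j = ((Finset.range N).filter fun i => j < lam.parts i).card := by
  unfold pconj
  congr 1
  ext i
  simp only [Finset.mem_filter, Finsupp.mem_support_iff, Finset.mem_range]
  constructor
  · rintro ⟨h1, h2⟩
    refine ⟨?_, h2⟩
    by_contra hc
    exact h1 (hN i (by omega))
  · rintro ⟨h1, h2⟩
    exact ⟨by omega, h2⟩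

lemma psize_eq_sum (lam : PartitionF) {N : ℕ} (hN : ∀ i, N ≤ i → lam.parts i = 0) :
    psize lam = ∑ i ∈ Finset.range N, lam.parts i := by
  rw [psize, Finsupp.sum]
  refine Finset.sum_subset ?_ ?_
  · intro x hx
    rw [Finsupp.mem_support_iff] at hx
    rw [Finset.mem_range]
    by_contra hc
    exact hx (hN x (by omega))
  · intro x _ hx
    exact Finsupp.notMem_support_iff.mp hx

lemma filter_range_lt {c M : ℕ} (h : c ≤ M) :
    (Finset.range M).filter (fun j => j < c) = Finset.range c := by
  ext x
  simp only [Finset.mem_filter, Finset.mem_range]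
  omega

lemma psize_eq_sum_pconj (lam : PartitionF) {M : ℕ} (hM : lam.parts 0 ≤ M) :
    psize lam = ∑ j ∈ Finset.range M, pconj lam j := by
  set N := lam.parts.support.card with hNdef
  have hsupp : lam.parts.support = Finset.range N :=
    down_eq_range _ (by
      intro a b hb hab
      simp only [Finsupp.mem_support_iff] at hb ⊢
      have := lam.antitone hab
      omega)
  have hzero : ∀ i, N ≤ i → lam.parts i = 0 := by
    intro i hi
    by_contra hc
    have : i ∈ lam.parts.support := Finsupp.mem_support_iff.mpr hc
    rw [hsupp, Finset.mem_range] at this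
    omega
  have key : ∀ i, lam.parts i = ∑ j ∈ Finset.range M, if j < lam.parts i then 1 else 0 := by
    intro i
    rw [← Finset.card_filter,
      filter_range_lt (le_trans (lam.antitone (Nat.zero_le i)) hM), Finset.card_range]
  calc psize lam = ∑ i ∈ Finset.range N, lam.parts i := psize_eq_sum lam hzero
    _ = ∑ i ∈ Finset.range N, ∑ j ∈ Finset.range M, (if j < lam.parts i then 1 else 0) :=
        Finset.sum_congr rfl (fun i _ => key i)
    _ = ∑ j ∈ Finset.range M, ∑ i ∈ Finset.range N, (if j < lam.parts i then 1 else 0) :=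
        Finset.sum_comm
    _ = ∑ j ∈ Finset.range M, pconj lam j :=
        Finset.sum_congr rfl (fun j _ => by
          rw [pconj_eq_card_range lam hzero j, Finset.card_filter])

lemma pconj_zero_le (nu : PartitionF) {l : ℕ} (hnu : nu.parts l = 0) : pconj nu 0 ≤ l := by
  have hsub : nu.parts.support ⊆ Finset.range l := by
    intro i hi
    rw [Finsupp.mem_support_iff] at hi
    rw [Finset.mem_range]
    by_contra hc
    exact hi (parts_zero_of_le nu hnu (by omega))
  calc pconj nu 0 ≤ nu.parts.support.card := Finset.card_filter_le _ _
    _ ≤ l := by simpa using Finset.card_le_card hsub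

noncomputable def muF (k l : ℕ) (lam : PartitionF) : PartitionF where
  parts := Finsupp.onFinset (Finset.range k)
    (fun i => if i < k then lam.parts i - l else 0)
    (fun i h => by
      rw [Finset.mem_range]
      by_contra hc
      exact h (if_neg hc))
  antitone := by
    intro i j hij
    simp only [Finsupp.onFinset_apply]
    by_cases hj : j < k
    · rw [if_pos hj, if_pos (by omega)]
      exact Nat.sub_le_sub_right (lam.antitone hij) l
    · rw [if_neg hj]
      exact Nat.zero_le _

lemma muF_apply_lt (k l : ℕ) (lam : PartitionF) {i : ℕ} (hi : i < k) :
    (muF k l lam).parts i = lam.parts i - l := by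
  simp [muF, hi]

lemma muF_apply_ge (k l : ℕ) (lam : PartitionF) {i : ℕ} (hi : k ≤ i) :
    (muF k l lam).parts i = 0 := by
  simp [muF]
  omega

noncomputable def nuF (k l : ℕ) (lam : PartitionF) : PartitionF where
  parts := Finsupp.onFinset (Finset.range l)
    (fun j => if j < l then pconj lam j - k else 0)
    (fun j h => by
      rw [Finset.mem_range]
      by_contra hc
      exact h (if_neg hc))
  antitone := by
    intro i j hij
    simp only [Finsupp.onFinset_apply]
    by_cases hj : j < l
    · rw [if_pos hj, if_pos (by omega)]
      exact Nat.sub_le_sub_right (pconj_anti lam hij) k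
    · rw [if_neg hj]
      exact Nat.zero_le _

lemma nuF_apply_lt (k l : ℕ) (lam : PartitionF) {j : ℕ} (hj : j < l) :
    (nuF k l lam).parts j = pconj lam j - k := by
  simp [nuF, hj]

lemma nuF_apply_ge (k l : ℕ) (lam : PartitionF) {j : ℕ} (hj : l ≤ j) :
    (nuF k l lam).parts j = 0 := by
  simp [nuF]
  omega

noncomputable def lamB (k l : ℕ) (mu nu : PartitionF) (hnu : nu.parts l = 0) : PartitionF where
  parts := Finsupp.onFinset (Finset.range (k + nu.parts 0))
    (fun i => if i < k then mu.parts i + l else pconj nu (i - k))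
    (by
      intro i h
      rw [Finset.mem_range]
      by_cases hik : i < k
      · omega
      · simp only [if_neg hik] at h
        by_contra hc
        exact h (pconj_eq_zero nu (by omega)))
  antitone := by
    intro i j hij
    simp only [Finsupp.onFinset_apply]
    by_cases hjk : j < k
    · rw [if_pos hjk, if_pos (by omega)]
      have := mu.antitone hij
      omega
    · rw [if_neg hjk]
      by_cases hik : i < k
      · rw [if_pos hik]
        have h1 := pconj_zero_le nu hnu
        have h2 := pconj_anti nu (Nat.zero_le (j - k))
        omega
      · rw [if_neg hik]
        exact pconj_anti nu (by omega)

lemma lamB_apply_lt (k l : ℕ) (mu nu : PartitionF) (hnu : nu.parts l = 0) {i : ℕ}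
    (hi : i < k) : (lamB k l mu nu hnu).parts i = mu.parts i + l := by
  simp [lamB, hi]

lemma lamB_apply_ge (k l : ℕ) (mu nu : PartitionF) (hnu : nu.parts l = 0) {i : ℕ}
    (hi : k ≤ i) : (lamB k l mu nu hnu).parts i = pconj nu (i - k) := by
  simp [lamB]
  omega

lemma pconj_nuF (k l : ℕ) (lam : PartitionF) (h1 : lam.parts k ≤ l) (m : ℕ) :
    pconj (nuF k l lam) m = lam.parts (k + m) := by
  have hz : ∀ j, l ≤ j → (nuF k l lam).parts j = 0 := fun j hj => nuF_apply_ge k l lam hj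
  rw [pconj_eq_card_range _ hz m]
  have heq : ((Finset.range l).filter fun j => m < (nuF k l lam).parts j)
      = (Finset.range l).filter fun j => j < lam.parts (k + m) := by
    ext j
    simp only [Finset.mem_filter, Finset.mem_range]
    constructor
    · rintro ⟨hjl, h⟩
      rw [nuF_apply_lt k l lam hjl, lt_tsub_iff_left] at h
      exact ⟨hjl, (lt_pconj_iff lam (k + m) j).mp h⟩
    · rintro ⟨hjl, h⟩
      refine ⟨hjl, ?_⟩
      rw [nuF_apply_lt k l lam hjl, lt_tsub_iff_left]
      exact (lt_pconj_iff lam (k + m) j).mpr h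
  rw [heq, filter_range_lt (le_trans (lam.antitone (Nat.le_add_right k m)) h1),
    Finset.card_range]

lemma lamB_zero (k l : ℕ) (mu nu : PartitionF) (hnu : nu.parts l = 0) :
    ∀ i, k + nu.parts 0 ≤ i → (lamB k l mu nu hnu).parts i = 0 := by
  intro i hi
  rw [lamB_apply_ge k l mu nu hnu (by omega)]
  exact pconj_eq_zero nu (by omega)

lemma pconj_lamB (k l : ℕ) (mu nu : PartitionF) (hnu : nu.parts l = 0) {j : ℕ}
    (hj : j < l) : pconj (lamB k l mu nu hnu) j = k + nu.parts j := by
  rw [pconj_eq_card_range _ (lamB_zero k l mu nu hnu) j, Finset.card_filter,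
    Finset.sum_range_add]
  have e1 : ∀ i ∈ Finset.range k,
      (if j < (lamB k l mu nu hnu).parts i then 1 else 0) = 1 := by
    intro i hi
    rw [Finset.mem_range] at hi
    rw [lamB_apply_lt k l mu nu hnu hi, if_pos (by omega)]
  have e2 : ∀ m ∈ Finset.range (nu.parts 0),
      (if j < (lamB k l mu nu hnu).parts (k + m) then 1 else 0)
        = (if m < nu.parts j then 1 else 0) := by
    intro m _
    rw [lamB_apply_ge k l mu nu hnu (Nat.le_add_right k m)]
    have : k + m - k = m := by omega
    rw [this]
    congr 1
    simp only [eq_iff_iff]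
    exact lt_pconj_iff nu j m
  rw [Finset.sum_congr rfl e1, Finset.sum_congr rfl e2, Finset.sum_const,
    Finset.card_range, smul_eq_mul, mul_one, ← Finset.card_filter,
    filter_range_lt (nu.antitone (Nat.zero_le j)), Finset.card_range]

lemma psize_lamB (k l : ℕ) (mu nu : PartitionF) (hmu : mu.parts k = 0)
    (hnu : nu.parts l = 0) :
    psize (lamB k l mu nu hnu) = psize mu + psize nu + k * l := by
  rw [psize_eq_sum _ (lamB_zero k l mu nu hnu), Finset.sum_range_add]
  have e1 : ∀ i ∈ Finset.range k, (lamB k l mu nu hnu).parts i = mu.parts i + l := by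
    intro i hi
    rw [Finset.mem_range] at hi
    exact lamB_apply_lt k l mu nu hnu hi
  have e2 : ∀ m ∈ Finset.range (nu.parts 0),
      (lamB k l mu nu hnu).parts (k + m) = pconj nu m := by
    intro m _
    rw [lamB_apply_ge k l mu nu hnu (Nat.le_add_right k m)]
    congr 1
    omega
  rw [Finset.sum_congr rfl e1, Finset.sum_congr rfl e2, Finset.sum_add_distrib,
    Finset.sum_const, Finset.card_range, smul_eq_mul,
    ← psize_eq_sum mu (fun i hi => parts_zero_of_le mu hmu hi),
    ← psize_eq_sum_pconj nu (le_refl _)]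
  ring

lemma lamB_muF_nuF (k l : ℕ) (lam : PartitionF) (hk : 1 ≤ k)
    (h1 : lam.parts k ≤ l) (h2 : l ≤ lam.parts (k - 1))
    (hnu : (nuF k l lam).parts l = 0) :
    lamB k l (muF k l lam) (nuF k l lam) hnu = lam := by
  apply PartitionF.ext'
  intro i
  by_cases hik : i < k
  · rw [lamB_apply_lt _ _ _ _ _ hik, muF_apply_lt _ _ _ hik]
    have : l ≤ lam.parts i := le_trans h2 (lam.antitone (by omega))
    omega
  · rw [lamB_apply_ge _ _ _ _ _ (by omega), pconj_nuF k l lam h1 (i - k)]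
    congr 1
    omega

lemma muF_lamB (k l : ℕ) (mu nu : PartitionF) (hmu : mu.parts k = 0)
    (hnu : nu.parts l = 0) :
    muF k l (lamB k l mu nu hnu) = mu := by
  apply PartitionF.ext'
  intro i
  by_cases hik : i < k
  · rw [muF_apply_lt _ _ _ hik, lamB_apply_lt _ _ _ _ _ hik]
    omega
  · rw [muF_apply_ge _ _ _ (by omega), parts_zero_of_le mu hmu (by omega : k ≤ i)]

lemma nuF_lamB (k l : ℕ) (mu nu : PartitionF) (hmu : mu.parts k = 0)
    (hnu : nu.parts l = 0) :
    nuF k l (lamB k l mu nu hnu) = nu := by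
  apply PartitionF.ext'
  intro j
  by_cases hjl : j < l
  · rw [nuF_apply_lt _ _ _ hjl, pconj_lamB k l mu nu hnu hjl]
    omega
  · rw [nuF_apply_ge _ _ _ (by omega), parts_zero_of_le nu hnu (by omega : l ≤ j)]


/-- The map `λ ↦ (μ, ν)`, `μ_i = λ_i - ℓ` (`i ≤ k`), `ν_j = λ'_j - k`
(`j ≤ ℓ`), is a bijection between typical partitions of `n` in `H(k,ℓ)` and
pairs `(μ,ν)` with `μ` of at most `k` parts, `ν` of at most `ℓ` parts and
`|μ| + |ν| + kℓ = n`. -/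
theorem typical_bijection (k l n : ℕ) (hk : 1 ≤ k) (hl : 1 ≤ l) :
    ∃ e : {lam : PartitionF // psize lam = n ∧ lam.parts k ≤ l ∧ l ≤ lam.parts (k - 1)} ≃
          {p : PartitionF × PartitionF //
            p.1.parts k = 0 ∧ p.2.parts l = 0 ∧ psize p.1 + psize p.2 + k * l = n},
      ∀ lam, (∀ i, i < k → ((e lam).1.1.parts i = lam.1.parts i - l)) ∧
             (∀ j, j < l → ((e lam).1.2.parts j = pconj lam.1 j - k)) := by
  refine ⟨⟨fun lam => ⟨(muF k l lam.1, nuF k l lam.1), ?_, ?_, ?_⟩,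
    fun p => ⟨lamB k l p.1.1 p.1.2 p.2.2.1, ?_, ?_, ?_⟩, ?_, ?_⟩, ?_⟩
  · exact muF_apply_ge k l lam.1 (le_refl k)
  · exact nuF_apply_ge k l lam.1 (le_refl l)
  · -- size for forward map
    have hmu : (muF k l lam.1).parts k = 0 := muF_apply_ge k l lam.1 (le_refl k)
    have hnu : (nuF k l lam.1).parts l = 0 := nuF_apply_ge k l lam.1 (le_refl l)
    have := psize_lamB k l (muF k l lam.1) (nuF k l lam.1) hmu hnu
    rw [lamB_muF_nuF k l lam.1 hk lam.2.2.1 lam.2.2.2 hnu] at this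
    rw [← this, lam.2.1]
  · -- psize (lamB ...) = n
    rw [psize_lamB k l p.1.1 p.1.2 p.2.1 p.2.2.1]
    exact p.2.2.2
  · -- lamB.parts k ≤ l
    rw [lamB_apply_ge k l p.1.1 p.1.2 p.2.2.1 (le_refl k), Nat.sub_self]
    exact pconj_zero_le p.1.2 p.2.2.1
  · -- l ≤ lamB.parts (k-1)
    rw [lamB_apply_lt k l p.1.1 p.1.2 p.2.2.1 (by omega : k - 1 < k)]
    omega
  · -- left inverse
    intro lam
    apply Subtype.ext
    exact lamB_muF_nuF k l lam.1 hk lam.2.2.1 lam.2.2.2 (nuF_apply_ge k l lam.1 (le_refl l))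
  · -- right inverse
    intro p
    apply Subtype.ext
    apply Prod.ext
    · exact muF_lamB k l p.1.1 p.1.2 p.2.1 p.2.2.1
    · exact nuF_lamB k l p.1.1 p.1.2 p.2.1 p.2.2.1
  · -- the characterizing property
    intro lam
    exact ⟨fun i hi => muF_apply_lt k l lam.1 hi, fun j hj => nuF_apply_lt k l lam.1 hj⟩
end

section
/- Let P(t) be a formal power series that is a rational function with denominator a finite product of terms (1 - w) where each w is a monic monomial in t_1,...,t_{n+1}. Then the series ∂P/∂t_{n+1} evaluated at t_{n+1} = 0 (equivalently, the coefficient extraction of the part of P of degree exactly 1 in t_{n+1}) is again a rational function in t_1,...,t_n whose denominator is a finite product of terms (1 - w') with w' monic monomials in t_1,...,t_n. -/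
open MvPowerSeries Finsupp

variable {n : ℕ}

noncomputable section

def emb (e : Fin n →₀ ℕ) : Fin (n+1) →₀ ℕ := Finsupp.mapDomain Fin.castSucc e

def res (d : Fin (n+1) →₀ ℕ) : Fin n →₀ ℕ :=
  Finsupp.equivFunOnFinite.symm (fun i => d i.castSucc)

def L (n : ℕ) : Fin (n+1) →₀ ℕ := Finsupp.single (Fin.last n) 1

lemma emb_apply_castSucc (e : Fin n →₀ ℕ) (i : Fin n) : emb e i.castSucc = e i :=
  Finsupp.mapDomain_apply (Fin.castSucc_injective n) e i

lemma emb_apply_last (e : Fin n →₀ ℕ) : emb e (Fin.last n) = 0 := by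
  refine Finsupp.mapDomain_notin_range _ _ ?_
  rintro ⟨i, hi⟩
  exact absurd (congrArg Fin.val hi) (by simp [Fin.castSucc]; omega)

lemma res_apply (d : Fin (n+1) →₀ ℕ) (i : Fin n) : res d i = d i.castSucc := rfl

lemma res_emb (e : Fin n →₀ ℕ) : res (emb e) = e := by
  ext i; rw [res_apply, emb_apply_castSucc]

lemma emb_res (d : Fin (n+1) →₀ ℕ) (h : d (Fin.last n) = 0) : emb (res d) = d := by
  ext j
  rcases Fin.eq_castSucc_or_eq_last j with ⟨i, rfl⟩ | rfl
  · rw [emb_apply_castSucc, res_apply]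
  · rw [emb_apply_last, h]

lemma emb_add (a b : Fin n →₀ ℕ) : emb (a + b) = emb a + emb b :=
  Finsupp.mapDomain_add

lemma emb_injective : Function.Injective (emb (n := n)) :=
  Finsupp.mapDomain_injective (Fin.castSucc_injective n)

lemma res_add (a b : Fin (n+1) →₀ ℕ) : res (a + b) = res a + res b := by
  ext i; simp [res_apply]

lemma L_apply_last : L n (Fin.last n) = 1 := by simp [L]

lemma L_apply_castSucc (i : Fin n) : L n i.castSucc = 0 := by
  rw [L, Finsupp.single_apply_eq_zero]
  intro h
  exact absurd (congrArg Fin.val h) (by simp [Fin.castSucc]; omega)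

lemma res_L : res (L n) = 0 := by
  ext i; rw [res_apply, L_apply_castSucc]; rfl

lemma emb_res_add_L (d : Fin (n+1) →₀ ℕ) (h : d (Fin.last n) = 1) :
    emb (res d) + L n = d := by
  ext j
  rcases Fin.eq_castSucc_or_eq_last j with ⟨i, rfl⟩ | rfl
  · rw [Finsupp.add_apply, emb_apply_castSucc, res_apply, L_apply_castSucc, add_zero]
  · rw [Finsupp.add_apply, emb_apply_last, L_apply_last, h]

/-- coefficient at `u = 0`. -/
def tau0 (φ : MvPowerSeries (Fin (n+1)) ℚ) : MvPowerSeries (Fin n) ℚ :=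
  fun e => coeff (emb e) φ

/-- coefficient of `u¹`. -/
def tau1 (φ : MvPowerSeries (Fin (n+1)) ℚ) : MvPowerSeries (Fin n) ℚ :=
  fun e => coeff (emb e + L n) φ

lemma coeff_tau0 (φ : MvPowerSeries (Fin (n+1)) ℚ) (e : Fin n →₀ ℕ) :
    coeff e (tau0 φ) = coeff (emb e) φ := rfl

lemma coeff_tau1 (φ : MvPowerSeries (Fin (n+1)) ℚ) (e : Fin n →₀ ℕ) :
    coeff e (tau1 φ) = coeff (emb e + L n) φ := rfl

lemma tau0_one : tau0 (n := n) 1 = 1 := by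
  ext e
  rw [coeff_tau0, coeff_one, coeff_one]
  by_cases h : e = 0
  · subst h
    rw [if_pos rfl, if_pos]
    ext j
    rcases Fin.eq_castSucc_or_eq_last j with ⟨i, rfl⟩ | rfl
    · rw [emb_apply_castSucc]; rfl
    · rw [emb_apply_last]; rfl
  · rw [if_neg h, if_neg]
    intro he
    apply h
    have := res_emb e
    rw [he] at this
    rw [← this]; ext i; rw [res_apply]; rfl

lemma tau1_one : tau1 (n := n) 1 = 0 := by
  ext e
  rw [coeff_tau1, coeff_one, map_zero, if_neg]
  intro h
  have := DFunLike.congr_fun h (Fin.last n)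
  simp only [Finsupp.coe_add, Pi.add_apply, emb_apply_last, L_apply_last,
    Finsupp.coe_zero, Pi.zero_apply] at this
  omega

lemma tau0_sub (a b : MvPowerSeries (Fin (n+1)) ℚ) : tau0 (a - b) = tau0 a - tau0 b := by
  ext e; rw [coeff_tau0, map_sub, map_sub, coeff_tau0, coeff_tau0]

lemma tau1_sub (a b : MvPowerSeries (Fin (n+1)) ℚ) : tau1 (a - b) = tau1 a - tau1 b := by
  ext e; rw [coeff_tau1, map_sub, map_sub, coeff_tau1, coeff_tau1]

lemma tau0_sum {ι : Type*} (s : Finset ι) (f : ι → MvPowerSeries (Fin (n+1)) ℚ) :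
    tau0 (∑ i ∈ s, f i) = ∑ i ∈ s, tau0 (f i) := by
  ext e
  rw [coeff_tau0, map_sum, map_sum]
  exact Finset.sum_congr rfl fun i _ => (coeff_tau0 _ _).symm

lemma tau1_sum {ι : Type*} (s : Finset ι) (f : ι → MvPowerSeries (Fin (n+1)) ℚ) :
    tau1 (∑ i ∈ s, f i) = ∑ i ∈ s, tau1 (f i) := by
  ext e
  rw [coeff_tau1, map_sum, map_sum]
  exact Finset.sum_congr rfl fun i _ => (coeff_tau1 _ _).symm

lemma tau0_mul (a b : MvPowerSeries (Fin (n+1)) ℚ) :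
    tau0 (a * b) = tau0 a * tau0 b := by
  ext e
  rw [coeff_tau0, coeff_mul, coeff_mul]
  refine Finset.sum_nbij' (fun p => (res p.1, res p.2)) (fun q => (emb q.1, emb q.2))
    ?_ ?_ ?_ ?_ ?_
  · rintro ⟨x, y⟩ hxy
    rw [Finset.HasAntidiagonal.mem_antidiagonal] at hxy ⊢
    have hx : x (Fin.last n) = 0 ∧ y (Fin.last n) = 0 := by
      have := DFunLike.congr_fun hxy (Fin.last n)
      simp only [Finsupp.coe_add, Pi.add_apply, emb_apply_last] at this
      omega
    apply emb_injective
    rw [emb_add, emb_res _ hx.1, emb_res _ hx.2, hxy]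
  · rintro ⟨u, v⟩ huv
    rw [Finset.HasAntidiagonal.mem_antidiagonal] at huv ⊢
    rw [← emb_add, huv]
  · rintro ⟨x, y⟩ hxy
    rw [Finset.HasAntidiagonal.mem_antidiagonal] at hxy
    have hx : x (Fin.last n) = 0 ∧ y (Fin.last n) = 0 := by
      have := DFunLike.congr_fun hxy (Fin.last n)
      simp only [Finsupp.coe_add, Pi.add_apply, emb_apply_last] at this
      omega
    simp only [Prod.mk.injEq]
    exact ⟨emb_res _ hx.1, emb_res _ hx.2⟩
  · rintro ⟨u, v⟩ _
    simp only [Prod.mk.injEq]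
    exact ⟨res_emb u, res_emb v⟩
  · rintro ⟨x, y⟩ hxy
    rw [Finset.HasAntidiagonal.mem_antidiagonal] at hxy
    have hx : x (Fin.last n) = 0 ∧ y (Fin.last n) = 0 := by
      have := DFunLike.congr_fun hxy (Fin.last n)
      simp only [Finsupp.coe_add, Pi.add_apply, emb_apply_last] at this
      omega
    simp only [coeff_tau0]
    rw [emb_res _ hx.1, emb_res _ hx.2]

lemma last_sum_eq_one {e : Fin n →₀ ℕ} {x y : Fin (n+1) →₀ ℕ}
    (h : x + y = emb e + L n) : x (Fin.last n) + y (Fin.last n) = 1 := by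
  have := DFunLike.congr_fun h (Fin.last n)
  simpa [emb_apply_last, L_apply_last] using this

lemma tau1_mul (a b : MvPowerSeries (Fin (n+1)) ℚ) :
    tau1 (a * b) = tau0 a * tau1 b + tau1 a * tau0 b := by
  ext e
  rw [coeff_tau1, map_add, coeff_mul, coeff_mul, coeff_mul,
    ← Finset.sum_filter_add_sum_filter_not (Finset.HasAntidiagonal.antidiagonal (emb e + L n))
      (fun p => p.1 (Fin.last n) = 0)]
  congr 1
  · refine Finset.sum_nbij' (fun p => (res p.1, res p.2)) (fun q => (emb q.1, emb q.2 + L n))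
      ?_ ?_ ?_ ?_ ?_
    · rintro ⟨x, y⟩ hxy
      rw [Finset.mem_filter, Finset.HasAntidiagonal.mem_antidiagonal] at hxy
      obtain ⟨hxy, hx0⟩ := hxy
      replace hxy : x + y = emb e + L n := hxy
      replace hx0 : x (Fin.last n) = 0 := hx0
      have hy1 : y (Fin.last n) = 1 := by have := last_sum_eq_one hxy; omega
      rw [Finset.HasAntidiagonal.mem_antidiagonal]
      apply emb_injective
      apply add_right_cancel (b := L n)
      rw [emb_add, add_assoc, emb_res_add_L _ hy1, emb_res _ hx0, hxy]
    · rintro ⟨u, v⟩ huv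
      rw [Finset.HasAntidiagonal.mem_antidiagonal] at huv
      rw [Finset.mem_filter, Finset.HasAntidiagonal.mem_antidiagonal]
      constructor
      · rw [← add_assoc, ← emb_add, huv]
      · exact emb_apply_last u
    · rintro ⟨x, y⟩ hxy
      rw [Finset.mem_filter, Finset.HasAntidiagonal.mem_antidiagonal] at hxy
      obtain ⟨hxy, hx0⟩ := hxy
      replace hxy : x + y = emb e + L n := hxy
      replace hx0 : x (Fin.last n) = 0 := hx0
      have hy1 : y (Fin.last n) = 1 := by have := last_sum_eq_one hxy; omega
      simp only [Prod.mk.injEq]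
      exact ⟨emb_res _ hx0, emb_res_add_L _ hy1⟩
    · rintro ⟨u, v⟩ _
      simp only [Prod.mk.injEq]
      refine ⟨res_emb u, ?_⟩
      rw [res_add, res_emb, res_L, add_zero]
    · rintro ⟨x, y⟩ hxy
      rw [Finset.mem_filter, Finset.HasAntidiagonal.mem_antidiagonal] at hxy
      obtain ⟨hxy, hx0⟩ := hxy
      replace hxy : x + y = emb e + L n := hxy
      replace hx0 : x (Fin.last n) = 0 := hx0
      have hy1 : y (Fin.last n) = 1 := by have := last_sum_eq_one hxy; omega
      simp only [coeff_tau0, coeff_tau1]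
      rw [emb_res _ hx0, emb_res_add_L _ hy1]
  · refine Finset.sum_nbij' (fun p => (res p.1, res p.2)) (fun q => (emb q.1 + L n, emb q.2))
      ?_ ?_ ?_ ?_ ?_
    · rintro ⟨x, y⟩ hxy
      rw [Finset.mem_filter, Finset.HasAntidiagonal.mem_antidiagonal] at hxy
      obtain ⟨hxy, hx0⟩ := hxy
      replace hxy : x + y = emb e + L n := hxy
      replace hx0 : x (Fin.last n) ≠ 0 := hx0
      have hx1 : x (Fin.last n) = 1 := by have := last_sum_eq_one hxy; omega
      have hy0 : y (Fin.last n) = 0 := by have := last_sum_eq_one hxy; omega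
      rw [Finset.HasAntidiagonal.mem_antidiagonal]
      apply emb_injective
      apply add_right_cancel (b := L n)
      rw [emb_add, add_right_comm, emb_res_add_L _ hx1, emb_res _ hy0, hxy]
    · rintro ⟨u, v⟩ huv
      rw [Finset.HasAntidiagonal.mem_antidiagonal] at huv
      rw [Finset.mem_filter, Finset.HasAntidiagonal.mem_antidiagonal]
      constructor
      · rw [add_right_comm, ← emb_add, huv]
      · intro h
        rw [Finsupp.add_apply, emb_apply_last, L_apply_last] at h
        omega
    · rintro ⟨x, y⟩ hxy
      rw [Finset.mem_filter, Finset.HasAntidiagonal.mem_antidiagonal] at hxy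
      obtain ⟨hxy, hx0⟩ := hxy
      replace hxy : x + y = emb e + L n := hxy
      replace hx0 : x (Fin.last n) ≠ 0 := hx0
      have hx1 : x (Fin.last n) = 1 := by have := last_sum_eq_one hxy; omega
      have hy0 : y (Fin.last n) = 0 := by have := last_sum_eq_one hxy; omega
      simp only [Prod.mk.injEq]
      exact ⟨emb_res_add_L _ hx1, emb_res _ hy0⟩
    · rintro ⟨u, v⟩ _
      simp only [Prod.mk.injEq]
      refine ⟨?_, res_emb v⟩
      rw [res_add, res_emb, res_L, add_zero]
    · rintro ⟨x, y⟩ hxy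
      rw [Finset.mem_filter, Finset.HasAntidiagonal.mem_antidiagonal] at hxy
      obtain ⟨hxy, hx0⟩ := hxy
      replace hxy : x + y = emb e + L n := hxy
      replace hx0 : x (Fin.last n) ≠ 0 := hx0
      have hx1 : x (Fin.last n) = 1 := by have := last_sum_eq_one hxy; omega
      have hy0 : y (Fin.last n) = 0 := by have := last_sum_eq_one hxy; omega
      simp only [coeff_tau0, coeff_tau1]
      rw [emb_res_add_L _ hx1, emb_res _ hy0]

lemma tau0_monomial (d : Fin (n+1) →₀ ℕ) (c : ℚ) :
    tau0 (monomial d c) =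
      if d (Fin.last n) = 0 then monomial (res d) c else 0 := by
  ext e
  rw [coeff_tau0, coeff_monomial]
  by_cases h : d (Fin.last n) = 0
  · rw [if_pos h, coeff_monomial]
    congr 1
    simp only [eq_iff_iff]
    constructor
    · rintro rfl; rw [res_emb]
    · rintro rfl; rw [emb_res _ h]
  · rw [if_neg h, map_zero, if_neg]
    rintro rfl
    exact h (emb_apply_last e)

lemma tau1_monomial (d : Fin (n+1) →₀ ℕ) (c : ℚ) :
    tau1 (monomial d c) =
      if d (Fin.last n) = 1 then monomial (res d) c else 0 := by
  ext e
  rw [coeff_tau1, coeff_monomial]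
  by_cases h : d (Fin.last n) = 1
  · rw [if_pos h, coeff_monomial]
    congr 1
    simp only [eq_iff_iff]
    constructor
    · rintro rfl
      rw [res_add, res_emb, res_L, add_zero]
    · rintro rfl; rw [emb_res_add_L _ h]
  · rw [if_neg h, map_zero, if_neg]
    rintro rfl
    apply h
    rw [Finsupp.add_apply, emb_apply_last, L_apply_last]

/-- being (the coercion of) a polynomial -/
def IsPol {σ : Type*} (R : MvPowerSeries σ ℚ) : Prop :=
  ∃ p : MvPolynomial σ ℚ, (p : MvPowerSeries σ ℚ) = R

lemma IsPol.zero {σ : Type*} : IsPol (0 : MvPowerSeries σ ℚ) := ⟨0, by push_cast; rfl⟩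

lemma IsPol.one {σ : Type*} : IsPol (1 : MvPowerSeries σ ℚ) := ⟨1, by push_cast; rfl⟩

lemma IsPol.add {σ : Type*} {a b : MvPowerSeries σ ℚ} (ha : IsPol a) (hb : IsPol b) :
    IsPol (a + b) := by
  obtain ⟨p, rfl⟩ := ha; obtain ⟨q, rfl⟩ := hb
  exact ⟨p + q, by push_cast; ring⟩

lemma IsPol.mul {σ : Type*} {a b : MvPowerSeries σ ℚ} (ha : IsPol a) (hb : IsPol b) :
    IsPol (a * b) := by
  obtain ⟨p, rfl⟩ := ha; obtain ⟨q, rfl⟩ := hb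
  exact ⟨p * q, by push_cast; ring⟩

lemma IsPol.sub {σ : Type*} {a b : MvPowerSeries σ ℚ} (ha : IsPol a) (hb : IsPol b) :
    IsPol (a - b) := by
  obtain ⟨p, rfl⟩ := ha; obtain ⟨q, rfl⟩ := hb
  exact ⟨p - q, map_sub MvPolynomial.coeToMvPowerSeries.ringHom p q⟩

lemma IsPol.monomial {σ : Type*} (d : σ →₀ ℕ) (c : ℚ) :
    IsPol (MvPowerSeries.monomial d c) :=
  ⟨MvPolynomial.monomial d c, MvPolynomial.coe_monomial d c⟩

lemma IsPol.multiset_prod {σ : Type*} (S : Multiset (MvPowerSeries σ ℚ))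
    (h : ∀ x ∈ S, IsPol x) : IsPol S.prod := by
  induction S using Multiset.induction with
  | empty => simpa using IsPol.one
  | cons a S ih =>
    rw [Multiset.prod_cons]
    exact (h a (Multiset.mem_cons_self a S)).mul
      (ih fun x hx => h x (Multiset.mem_cons_of_mem hx))

lemma IsPol.finset_sum {σ ι : Type*} (s : Finset ι) (f : ι → MvPowerSeries σ ℚ)
    (h : ∀ i ∈ s, IsPol (f i)) : IsPol (∑ i ∈ s, f i) := by
  classical
  induction s using Finset.induction with
  | empty => simpa using IsPol.zero
  | insert _ _ hnot ih =>
    rw [Finset.sum_insert hnot]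
    exact (h _ (Finset.mem_insert_self _ _)).add
      (ih fun i hi => h i (Finset.mem_insert_of_mem hi))

lemma coe_as_sum (p : MvPolynomial (Fin (n+1)) ℚ) :
    (p : MvPowerSeries (Fin (n+1)) ℚ) =
      ∑ d ∈ p.support, monomial d (MvPolynomial.coeff d p) := by
  conv_lhs => rw [p.as_sum]
  rw [show ((∑ v ∈ p.support, MvPolynomial.monomial v (MvPolynomial.coeff v p) :
      MvPolynomial (Fin (n+1)) ℚ) : MvPowerSeries (Fin (n+1)) ℚ) =
      MvPolynomial.coeToMvPowerSeries.ringHom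
        (∑ v ∈ p.support, MvPolynomial.monomial v (MvPolynomial.coeff v p)) from rfl,
    map_sum]
  exact Finset.sum_congr rfl fun d _ => MvPolynomial.coe_monomial _ _

lemma ispol_tau0_coe (p : MvPolynomial (Fin (n+1)) ℚ) : IsPol (tau0 (p : MvPowerSeries (Fin (n+1)) ℚ)) := by
  rw [coe_as_sum, tau0_sum]
  refine IsPol.finset_sum _ _ fun d _ => ?_
  rw [tau0_monomial]
  split
  · exact IsPol.monomial _ _
  · exact IsPol.zero

lemma ispol_tau1_coe (p : MvPolynomial (Fin (n+1)) ℚ) : IsPol (tau1 (p : MvPowerSeries (Fin (n+1)) ℚ)) := by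
  rw [coe_as_sum, tau1_sum]
  refine IsPol.finset_sum _ _ fun d _ => ?_
  rw [tau1_monomial]
  split
  · exact IsPol.monomial _ _
  · exact IsPol.zero

lemma tau0_multiset_prod (S : Multiset (MvPowerSeries (Fin (n+1)) ℚ)) :
    tau0 S.prod = (S.map tau0).prod := by
  induction S using Multiset.induction with
  | empty => simpa using tau0_one
  | cons a S ih => rw [Multiset.prod_cons, tau0_mul, ih, Multiset.map_cons, Multiset.prod_cons]

lemma emb_zero : emb (0 : Fin n →₀ ℕ) = 0 := Finsupp.mapDomain_zero

def Fk (d : Fin (n+1) →₀ ℕ) : MvPowerSeries (Fin (n+1)) ℚ := 1 - monomial d 1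

def Fk' (e : Fin n →₀ ℕ) : MvPowerSeries (Fin n) ℚ := 1 - monomial e 1

lemma tau0_Fk (d : Fin (n+1) →₀ ℕ) :
    tau0 (Fk d) = if d (Fin.last n) = 0 then Fk' (res d) else 1 := by
  rw [Fk, tau0_sub, tau0_one, tau0_monomial]
  split
  · rfl
  · rw [sub_zero]

lemma ispol_tau0_Fk (d : Fin (n+1) →₀ ℕ) : IsPol (tau0 (Fk d)) := by
  rw [tau0_Fk]
  split
  · exact IsPol.one.sub (IsPol.monomial _ _)
  · exact IsPol.one

lemma ispol_tau1_Fk (d : Fin (n+1) →₀ ℕ) : IsPol (tau1 (Fk d)) := by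
  rw [Fk, tau1_sub, tau1_one, tau1_monomial]
  split
  · exact IsPol.zero.sub (IsPol.monomial _ _)
  · exact IsPol.zero.sub IsPol.zero

lemma ispol_tau1_Fkprod (M : Multiset (Fin (n+1) →₀ ℕ)) :
    IsPol (tau1 ((M.map Fk).prod)) := by
  induction M using Multiset.induction with
  | empty => rw [Multiset.map_zero, Multiset.prod_zero, tau1_one]; exact IsPol.zero
  | cons a M ih =>
    rw [Multiset.map_cons, Multiset.prod_cons, tau1_mul]
    refine ((ispol_tau0_Fk a).mul ih).add ((ispol_tau1_Fk a).mul ?_)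
    rw [tau0_multiset_prod]
    refine IsPol.multiset_prod _ fun x hx => ?_
    rw [Multiset.map_map, Multiset.mem_map] at hx
    obtain ⟨d, _, rfl⟩ := hx
    exact ispol_tau0_Fk d

end


/-- A formal power series in `t₁,…,t_{n+1}` is *nice rational* if multiplying
it by a finite product of factors `1 - w`, with each `w` a monic monomial of
positive degree, yields a polynomial. -/
def NiceRational {σ : Type*} (P : MvPowerSeries σ ℚ) : Prop :=
  ∃ (Num : MvPolynomial σ ℚ) (D : Multiset (σ →₀ ℕ)),
    (∀ d ∈ D, d ≠ 0) ∧
    P * (D.map fun d => (1 : MvPowerSeries σ ℚ) - MvPowerSeries.monomial d 1).prod =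
      (Num : MvPowerSeries σ ℚ)

/-- If `P(t₁,…,t_{n+1})` is nice rational, then `∂P/∂t_{n+1}|_{t_{n+1}=0}`,
i.e. the series in `t₁,…,t_n` whose coefficients are the coefficients of `P`
of degree exactly `1` in `t_{n+1}`, is again nice rational. -/
theorem niceRational_deriv (n : ℕ) (P : MvPowerSeries (Fin (n + 1)) ℚ)
    (hP : NiceRational P)
    (Q : MvPowerSeries (Fin n) ℚ)
    (hQ : ∀ e : Fin n →₀ ℕ,
      MvPowerSeries.coeff e Q =
        MvPowerSeries.coeff
          (Finsupp.mapDomain Fin.castSucc e + Finsupp.single (Fin.last n) 1) P) :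
    NiceRational Q := by
  classical
  obtain ⟨Num, D, hD, hEq⟩ := hP
  have hFk : (fun d => (1 : MvPowerSeries (Fin (n+1)) ℚ) - MvPowerSeries.monomial d 1) =
      Fk := rfl
  rw [hFk] at hEq
  set D₀ : Multiset (Fin (n+1) →₀ ℕ) := D.filter (fun d => d (Fin.last n) = 0) with hD₀def
  set G : Multiset (Fin n →₀ ℕ) := D₀.map res with hGdef
  have hDsplit : D₀ + D.filter (fun d => ¬ d (Fin.last n) = 0) = D :=
    Multiset.filter_add_not _ D
  set A : MvPowerSeries (Fin n) ℚ := (G.map Fk').prod with hAdef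
  have hsplit : tau0 ((D.map Fk).prod) = A := by
    rw [tau0_multiset_prod, Multiset.map_map, ← hDsplit, Multiset.map_add, Multiset.prod_add]
    have h1 : (D₀.map (tau0 ∘ Fk)).prod = A := by
      rw [hAdef, hGdef, Multiset.map_map]
      apply congrArg Multiset.prod
      apply Multiset.map_congr rfl
      intro d hd
      have hd0 : d (Fin.last n) = 0 := (Multiset.mem_filter.mp hd).2
      simp only [Function.comp_apply]
      rw [tau0_Fk, if_pos hd0]
    have h2 : ((D.filter (fun d => ¬ d (Fin.last n) = 0)).map (tau0 ∘ Fk)).prod = 1 := by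
      apply Multiset.prod_eq_one
      intro x hx
      rw [Multiset.mem_map] at hx
      obtain ⟨d, hd, rfl⟩ := hx
      have hd0 : ¬ d (Fin.last n) = 0 := (Multiset.mem_filter.mp hd).2
      simp only [Function.comp_apply]
      rw [tau0_Fk, if_neg hd0]
    rw [h1, h2, mul_one]
  have hA : IsPol A := by
    refine IsPol.multiset_prod _ fun x hx => ?_
    rw [Multiset.mem_map] at hx
    obtain ⟨e, _, rfl⟩ := hx
    exact IsPol.one.sub (IsPol.monomial _ _)
  obtain ⟨pA, hpA⟩ := hA
  obtain ⟨pB, hpB⟩ := ispol_tau1_Fkprod D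
  obtain ⟨N0, hN0⟩ := ispol_tau0_coe Num
  obtain ⟨N1, hN1⟩ := ispol_tau1_coe Num
  have hQ' : Q = tau1 P := by
    ext e
    rw [hQ e, coeff_tau1]
    rfl
  have e0 : tau0 P * A = ↑N0 := by
    rw [← hsplit, ← tau0_mul, hEq]
    exact hN0.symm
  have e1 : tau0 P * tau1 ((D.map Fk).prod) + tau1 P * A = ↑N1 := by
    rw [← hsplit, ← tau1_mul, hEq]
    exact hN1.symm
  refine ⟨N1 * pA - N0 * pB, G + G, ?_, ?_⟩
  · intro d hd
    rw [Multiset.mem_add] at hd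
    have hd' : d ∈ G := by tauto
    rw [hGdef, Multiset.mem_map] at hd'
    obtain ⟨d₀, hd₀, rfl⟩ := hd'
    have hmem : d₀ ∈ D ∧ d₀ (Fin.last n) = 0 := Multiset.mem_filter.mp hd₀
    intro h0
    apply hD d₀ hmem.1
    rw [← emb_res d₀ hmem.2, h0, emb_zero]
  · have hFk' : (fun d => (1 : MvPowerSeries (Fin n) ℚ) - MvPowerSeries.monomial d 1) =
        Fk' := rfl
    rw [hFk', Multiset.map_add, Multiset.prod_add, hQ']
    have hcast : ((N1 * pA - N0 * pB : MvPolynomial (Fin n) ℚ) : MvPowerSeries (Fin n) ℚ) =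
        (↑N1 : MvPowerSeries (Fin n) ℚ) * ↑pA - ↑N0 * ↑pB := by
      rw [show ((N1 * pA - N0 * pB : MvPolynomial (Fin n) ℚ) : MvPowerSeries (Fin n) ℚ) =
        MvPolynomial.coeToMvPowerSeries.ringHom (N1 * pA - N0 * pB) from rfl,
        map_sub, map_mul, map_mul]
      rfl
    rw [hcast, hpA, hpB, ← hAdef]
    calc tau1 P * (A * A)
        = (tau0 P * tau1 ((D.map Fk).prod) + tau1 P * A) * A
          - (tau0 P * A) * tau1 ((D.map Fk).prod) := by ring
      _ = (↑N1 : MvPowerSeries (Fin n) ℚ) * A - ↑N0 * tau1 ((D.map Fk).prod) := by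
          rw [e1, e0]
end
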